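/- (Barbalat's lemma) If f : [0,∞) → ℝ is differentiable, f' is uniformly continuous, and f(t) tends to a finite limit as t → ∞, then f'(t) → 0 as t → ∞. -/
import Mathlib


theorem barbalat_lemma
    (f f' : ℝ → ℝ) (L : ℝ)
    (hderiv : ∀ t, 0 ≤ t → HasDerivAt f (f' t) t)
    (huc : UniformContinuousOn f' (Set.Ici 0))
    (hlim : Filter.Tendsto f Filter.atTop (nhds L)) :
    Filter.Tendsto f' Filter.atTop (nhds 0) := by
  by_contra hcon
  rw [Metric.tendsto_atTop] at hcon
  push_neg at hcon
  obtain ⟨ε, hε, hbad⟩ := hcon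
  rw [Metric.uniformContinuousOn_iff] at huc
  obtain ⟨δ, hδ, huc⟩ := huc (ε / 2) (by linarith)
  rw [Metric.tendsto_atTop] at hlim
  obtain ⟨N, hN⟩ := hlim (ε * δ / 16) (by positivity)
  obtain ⟨t, ht, htε⟩ := hbad (max N 0)
  have ht0 : (0 : ℝ) ≤ t := le_trans (le_max_right _ _) ht
  have htN : N ≤ t := le_trans (le_max_left _ _) ht
  rw [Real.dist_eq, sub_zero] at htε
  set b := t + δ / 2 with hb
  have htb : t ≤ b := by simp [hb]; linarith
  have hbN : N ≤ b := le_trans htN htb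
  -- f' is close to f' t on [t, b]
  have hclose : ∀ s ∈ Set.Icc t b, |f' s - f' t| < ε / 2 := by
    intro s hs
    have hs0 : (0 : ℝ) ≤ s := le_trans ht0 hs.1
    have := huc s hs0 t ht0 ?_
    · rwa [Real.dist_eq] at this
    · rw [Real.dist_eq, abs_of_nonneg (by linarith [hs.1])]
      have := hs.2
      simp only [hb] at this
      linarith
  have hcont : ContinuousOn f (Set.Icc t b) := fun s hs =>
    ((hderiv s (le_trans ht0 hs.1)).continuousAt).continuousWithinAt
  have hdiff : DifferentiableOn ℝ f (interior (Set.Icc t b)) := by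
    rw [interior_Icc]
    exact fun s hs => ((hderiv s (le_trans ht0 (le_of_lt hs.1))).differentiableAt).differentiableWithinAt
  have hderiveq : ∀ s ∈ interior (Set.Icc t b), deriv f s = f' s := by
    rw [interior_Icc]
    exact fun s hs => (hderiv s (le_trans ht0 (le_of_lt hs.1))).deriv
  have hfbt : |f b - f t| < ε * δ / 8 := by
    have h1 := hN t htN
    have h2 := hN b hbN
    rw [Real.dist_eq] at h1 h2
    have := abs_sub_abs_le_abs_sub (f b - L) (f t - L)
    calc |f b - f t| = |(f b - L) - (f t - L)| := by ring_nf
      _ ≤ |f b - L| + |f t - L| := abs_sub _ _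
      _ < ε * δ / 8 := by linarith
  rcases le_or_gt 0 (f' t) with hpos | hneg
  · -- f' t ≥ ε
    have hft : ε ≤ f' t := by rwa [abs_of_nonneg hpos] at htε
    have hge : ∀ s ∈ interior (Set.Icc t b), ε / 2 ≤ deriv f s := by
      intro s hs
      rw [hderiveq s hs]
      have hs' : s ∈ Set.Icc t b := interior_subset hs
      have := hclose s hs'
      rw [abs_lt] at this
      linarith [this.1]
    have key := (convex_Icc t b).mul_sub_le_image_sub_of_le_deriv hcont hdiff hge
      t (Set.left_mem_Icc.2 htb) b (Set.right_mem_Icc.2 htb) htb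
    have : ε / 2 * (b - t) = ε * δ / 4 := by simp [hb]; ring
    have habs : f b - f t ≤ |f b - f t| := le_abs_self _
    nlinarith
  · -- f' t ≤ -ε
    have hft : f' t ≤ -ε := by
      rw [abs_of_neg hneg] at htε; linarith
    have hle : ∀ s ∈ interior (Set.Icc t b), deriv f s ≤ -(ε / 2) := by
      intro s hs
      rw [hderiveq s hs]
      have hs' : s ∈ Set.Icc t b := interior_subset hs
      have := hclose s hs'
      rw [abs_lt] at this
      linarith [this.2]
    have key := (convex_Icc t b).image_sub_le_mul_sub_of_deriv_le hcont hdiff hle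
      t (Set.left_mem_Icc.2 htb) b (Set.right_mem_Icc.2 htb) htb
    have : -(ε / 2) * (b - t) = -(ε * δ / 4) := by simp [hb]; ring
    have habs : -(f b - f t) ≤ |f b - f t| := neg_le_abs _
    nlinarith
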